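/- arXiv:2311.11330 — 3 statements merged into one kernel-verified Lean document; each statement's English description precedes it below -/
import Mathlib

section
/- Let (a,c) ∈ ℝ² and set b = (2−a)c. Let U ⊆ ℂ be open and connected, f : U → ℝ smooth, and suppose the curvature K of ds² = e^{−2f}|dz|² satisfies K(z) ≠ c for all z ∈ U; let ε ∈ {−1,1} be the (constant) sign of K − c on U. Then ds² is a generalized Ricci metric of type (a,b,c) on U if and only if the metric |K−c|·ds² has constant curvature ε·(1 − a/2), i.e., with f̂ = f − (1/2)·log|K−c|, one has e^{2f̂}·Δ₀f̂ = ε·(1 − a/2) on U. -/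
open Filter Topology

/-- Euclidean Laplacian on `ℂ ≅ ℝ²`. -/
noncomputable def lap0 (g : ℂ → ℝ) (z : ℂ) : ℝ :=
  fderiv ℝ (fun w => fderiv ℝ g w 1) z 1 +
    fderiv ℝ (fun w => fderiv ℝ g w Complex.I) z Complex.I

/-- Squared Euclidean gradient norm on `ℂ ≅ ℝ²`. -/
noncomputable def grad0sq (g : ℂ → ℝ) (z : ℂ) : ℝ :=
  (fderiv ℝ g z 1) ^ 2 + (fderiv ℝ g z Complex.I) ^ 2

/-- Gaussian curvature of the conformal metric `e^{-2f}|dz|²`. -/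
noncomputable def curv (f : ℂ → ℝ) (z : ℂ) : ℝ :=
  Real.exp (2 * f z) * lap0 f z

/-- `e^{-2f}|dz|²` is a generalized Ricci metric of type `(a,b,c)` on `U`:
`(c-K)·ΔK + ‖∇K‖² + (aK+b)(K-c)² = 0`, where `Δ = e^{2f}Δ₀` and `‖∇·‖² = e^{2f}|∇₀·|²`. -/
def IsGenRicci (a b c : ℝ) (f : ℂ → ℝ) (U : Set ℂ) : Prop :=
  ∀ z ∈ U,
    (c - curv f z) * (Real.exp (2 * f z) * lap0 (curv f) z) +
      Real.exp (2 * f z) * grad0sq (curv f) z +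
      (a * curv f z + b) * (curv f z - c) ^ 2 = 0

lemma contDiffOn_dderiv {U : Set ℂ} (hU : IsOpen U) {f : ℂ → ℝ}
    (hf : ContDiffOn ℝ (⊤ : ℕ∞) f U) (v : ℂ) :
    ContDiffOn ℝ (⊤ : ℕ∞) (fun w => fderiv ℝ f w v) U :=
  ContDiffOn.clm_apply (hf.fderiv_of_isOpen hU (by simp)) contDiffOn_const

lemma contDiffOn_lap0 {U : Set ℂ} (hU : IsOpen U) {f : ℂ → ℝ}
    (hf : ContDiffOn ℝ (⊤ : ℕ∞) f U) : ContDiffOn ℝ (⊤ : ℕ∞) (lap0 f) U :=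
  (contDiffOn_dderiv hU (contDiffOn_dderiv hU hf 1) 1).add
    (contDiffOn_dderiv hU (contDiffOn_dderiv hU hf Complex.I) Complex.I)

lemma contDiffOn_curv {U : Set ℂ} (hU : IsOpen U) {f : ℂ → ℝ}
    (hf : ContDiffOn ℝ (⊤ : ℕ∞) f U) : ContDiffOn ℝ (⊤ : ℕ∞) (curv f) U :=
  (Real.contDiff_exp.comp_contDiffOn (contDiffOn_const.mul hf)).mul
    (contDiffOn_lap0 hU hf)

/-- Second directional derivative of `f - (1/2)·log φ`. -/
lemma dderiv2_sub_log {U : Set ℂ} (hU : IsOpen U) {f φ : ℂ → ℝ}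
    (hf : ContDiffOn ℝ (⊤ : ℕ∞) f U) (hφ : ContDiffOn ℝ (⊤ : ℕ∞) φ U)
    (hφ0 : ∀ w ∈ U, φ w ≠ 0) {z : ℂ} (hz : z ∈ U) (v : ℂ) :
    fderiv ℝ (fun w => fderiv ℝ (fun w' => f w' - (1/2) * Real.log (φ w')) w v) z v
      = fderiv ℝ (fun w => fderiv ℝ f w v) z v
        - (1/2) * ((φ z)⁻¹ * fderiv ℝ (fun w => fderiv ℝ φ w v) z v
            - ((φ z)^2)⁻¹ * (fderiv ℝ φ z v)^2) := by
  have hdf : ∀ w ∈ U, DifferentiableAt ℝ f w := fun w hw =>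
    (hf.contDiffAt (hU.mem_nhds hw)).differentiableAt (by simp)
  have hdφ : ∀ w ∈ U, DifferentiableAt ℝ φ w := fun w hw =>
    (hφ.contDiffAt (hU.mem_nhds hw)).differentiableAt (by simp)
  have heq : ∀ w ∈ U, fderiv ℝ (fun w' => f w' - (1/2) * Real.log (φ w')) w
      = fderiv ℝ f w - (1/2 : ℝ) • ((φ w)⁻¹ • fderiv ℝ φ w) := by
    intro w hw
    have hlog : HasFDerivAt (fun w' => Real.log (φ w')) ((φ w)⁻¹ • fderiv ℝ φ w) w :=
      (hdφ w hw).hasFDerivAt.log (hφ0 w hw)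
    exact ((hdf w hw).hasFDerivAt.sub (hlog.const_mul (1/2))).fderiv
  have hev : (fun w => fderiv ℝ (fun w' => f w' - (1/2) * Real.log (φ w')) w v)
      =ᶠ[𝓝 z] (fun w => fderiv ℝ f w v - (1/2) * ((φ w)⁻¹ * fderiv ℝ φ w v)) := by
    filter_upwards [hU.mem_nhds hz] with w hw
    rw [heq w hw]; simp [mul_assoc]
  rw [hev.fderiv_eq]
  have hA : DifferentiableAt ℝ (fun w => fderiv ℝ f w v) z :=
    ((contDiffOn_dderiv hU hf v).contDiffAt (hU.mem_nhds hz)).differentiableAt (by simp)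
  have hB : DifferentiableAt ℝ (fun w => fderiv ℝ φ w v) z :=
    ((contDiffOn_dderiv hU hφ v).contDiffAt (hU.mem_nhds hz)).differentiableAt (by simp)
  have hC : HasFDerivAt φ (fderiv ℝ φ z) z := (hdφ z hz).hasFDerivAt
  have hinv : HasFDerivAt (fun w => (φ w)⁻¹) ((-((φ z)^2)⁻¹) • fderiv ℝ φ z) z :=
    (hasDerivAt_inv (hφ0 z hz)).comp_hasFDerivAt z hC
  have hmul := hinv.mul hB.hasFDerivAt
  have htot := hA.hasFDerivAt.sub (hmul.const_mul (1/2 : ℝ))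
  rw [(show HasFDerivAt (fun w => fderiv ℝ f w v - 1/2 * ((φ w)⁻¹ * fderiv ℝ φ w v)) _ z from htot).fderiv]
  simp only [ContinuousLinearMap.sub_apply, ContinuousLinearMap.smul_apply,
    ContinuousLinearMap.add_apply, smul_eq_mul]
  ring

/-- Laplacian of `f - (1/2)·log φ`. -/
lemma lap0_sub_log {U : Set ℂ} (hU : IsOpen U) {f φ : ℂ → ℝ}
    (hf : ContDiffOn ℝ (⊤ : ℕ∞) f U) (hφ : ContDiffOn ℝ (⊤ : ℕ∞) φ U)
    (hφ0 : ∀ w ∈ U, φ w ≠ 0) {z : ℂ} (hz : z ∈ U) :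
    lap0 (fun w' => f w' - (1/2) * Real.log (φ w')) z
      = lap0 f z - (1/2) * ((φ z)⁻¹ * lap0 φ z - ((φ z)^2)⁻¹ * grad0sq φ z) := by
  unfold lap0 grad0sq
  rw [dderiv2_sub_log hU hf hφ hφ0 hz 1, dderiv2_sub_log hU hf hφ hφ0 hz Complex.I]
  ring

theorem stmt6 (a c ε : ℝ) (hε : ε = -1 ∨ ε = 1) (U : Set ℂ) (hU : IsOpen U)
    (hUc : IsConnected U) (f : ℂ → ℝ) (hf : ContDiffOn ℝ (⊤ : ℕ∞) f U)
    (hK : ∀ z ∈ U, curv f z ≠ c)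
    (hsign : ∀ z ∈ U, 0 < ε * (curv f z - c)) :
    IsGenRicci a ((2 - a) * c) c f U ↔
      ∀ z ∈ U,
        curv (fun w => f w - (1 / 2) * Real.log |curv f w - c|) z
          = ε * (1 - a / 2) := by
  have hrw : (fun w => f w - (1 / 2) * Real.log |curv f w - c|)
      = (fun w => f w - (1 / 2) * Real.log (curv f w - c)) := by
    funext w; rw [Real.log_abs]
  have hφ : ContDiffOn ℝ (⊤ : ℕ∞) (fun w => curv f w - c) U :=
    (contDiffOn_curv hU hf).sub contDiffOn_const
  have hφ0 : ∀ w ∈ U, curv f w - c ≠ 0 := fun w hw => sub_ne_zero.2 (hK w hw)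
  have hlapeq : lap0 (fun w => curv f w - c) = lap0 (curv f) := by
    funext z
    unfold lap0
    have h1 : ∀ v : ℂ, (fun w => fderiv ℝ (fun w' => curv f w' - c) w v)
        = (fun w => fderiv ℝ (curv f) w v) := by
      intro v; funext w; rw [fderiv_sub_const]
    rw [h1 1, h1 Complex.I]
  have hgradeq : grad0sq (fun w => curv f w - c) = grad0sq (curv f) := by
    funext z; simp [grad0sq, fderiv_sub_const]
  have main : ∀ z ∈ U,
      ((c - curv f z) * (Real.exp (2 * f z) * lap0 (curv f) z) +
        Real.exp (2 * f z) * grad0sq (curv f) z +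
        (a * curv f z + (2 - a) * c) * (curv f z - c) ^ 2 = 0 ↔
      curv (fun w => f w - (1 / 2) * Real.log |curv f w - c|) z = ε * (1 - a / 2)) := by
    intro z hz
    rw [hrw]
    set E := Real.exp (2 * f z) with hE
    set p := curv f z - c with hpdef
    have hp : p ≠ 0 := hφ0 z hz
    have habs : |p| = ε * p := by
      rcases hε with h | h <;> subst h
      · have := hsign z hz
        rw [abs_of_neg (by linarith)]; ring
      · have := hsign z hz
        rw [abs_of_pos (by linarith)]; ring
    -- compute curv of the modified function
    have hcurv : curv (fun w => f w - (1 / 2) * Real.log (curv f w - c)) z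
        = E * (ε * p)⁻¹ *
          (lap0 f z - (1/2) * (p⁻¹ * lap0 (curv f) z - (p^2)⁻¹ * grad0sq (curv f) z)) := by
      have h0 : curv (fun w => f w - 1 / 2 * Real.log (curv f w - c)) z
          = Real.exp (2 * (f z - 1 / 2 * Real.log (curv f z - c))) *
            lap0 (fun w => f w - 1 / 2 * Real.log (curv f w - c)) z := rfl
      rw [h0, lap0_sub_log hU hf hφ hφ0 hz, hlapeq, hgradeq]
      have hexp : Real.exp (2 * (f z - 1 / 2 * Real.log (curv f z - c)))
          = E * (ε * p)⁻¹ := by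
        rw [show 2 * (f z - 1 / 2 * Real.log (curv f z - c))
            = 2 * f z - Real.log (curv f z - c) by ring, Real.exp_sub,
          Real.exp_log_eq_abs hp, habs, div_eq_mul_inv]
      rw [hexp]
    rw [hcurv]
    have hEF : E * lap0 f z = curv f z := rfl
    have hKp : curv f z = p + c := by rw [hpdef]; ring
    set F := lap0 f z
    set L := lap0 (curv f) z
    set G := grad0sq (curv f) z
    have key : (c - curv f z) * (E * L) + E * G +
        (a * curv f z + (2 - a) * c) * (curv f z - c) ^ 2
        = (E * (ε * p)⁻¹ * (F - 1/2 * (p⁻¹ * L - (p^2)⁻¹ * G)) - ε * (1 - a / 2))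
          * (2 * ε * p ^ 3) := by
      rw [hKp] at hEF ⊢
      rcases hε with h | h <;> subst h <;> field_simp <;>
        linear_combination (-2*p^2) * hEF
    rw [key]
    have hne : (2 * ε * p ^ 3) ≠ 0 := by
      rcases hε with h | h <;> subst h <;> simp [pow_ne_zero, hp]
    constructor
    · intro h
      have := (mul_eq_zero.1 h).resolve_right hne
      linarith [sub_eq_zero.1 this]
    · intro h
      rw [h]; ring
  constructor
  · intro h z hz; exact (main z hz).1 (h z hz)
  · intro h z hz; exact (main z hz).2 (h z hz)
end

section
/- Let (a,b,c) ∈ ℝ³ with b ≠ (2−a)c and let ε ∈ {−1,1}. Let ds² = e^{−2f}|dz|² be a generalized Ricci metric of type (a,b,c) on an open set U ⊆ ℂ with ε(K−c) ≥ 0 on U, and let U* = {z ∈ U : K(z) ≠ c}. Then on U* the metric |K−c|·ds² = e^{−2f̂}|dz|², where f̂ = f − (1/2)·log|K−c|, is a generalized Ricci metric of type (2(ac+b)/(b+(a−2)c), −2εb/(b+(a−2)c), ε(1−a/2)), and its curvature K̃ satisfies K̃ − ε(1−a/2) = −((b+(a−2)c)/2)·ε·(K−c)^{−1} on U*. -/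
open Filter Topology

lemma smooth_fderiv_apply {f : ℂ → ℝ} {U : Set ℂ} (hU : IsOpen U)
    (hf : ContDiffOn ℝ (⊤ : ℕ∞) f U) (v : ℂ) :
    ContDiffOn ℝ (⊤ : ℕ∞) (fun w => fderiv ℝ f w v) U :=
  (hf.fderiv_of_isOpen hU (by simp)).clm_apply contDiffOn_const
lemma diffAt {f : ℂ → ℝ} {U : Set ℂ} (hU : IsOpen U)
    (hf : ContDiffOn ℝ (⊤ : ℕ∞) f U) {z : ℂ} (hz : z ∈ U) : DifferentiableAt ℝ f z :=
  (hf.differentiableOn (by simp)).differentiableAt (hU.mem_nhds hz)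
lemma secondDeriv_eq {u F : ℂ → ℝ} {V : Set ℂ} (hV : IsOpen V) {z : ℂ} (hz : z ∈ V)
    {v : ℂ} (h : ∀ w ∈ V, fderiv ℝ u w v = F w) {Φ : ℂ →L[ℝ] ℝ}
    (hΦ : HasFDerivAt F Φ z) :
    fderiv ℝ (fun w => fderiv ℝ u w v) z = Φ := by
  have he : (fun w => fderiv ℝ u w v) =ᶠ[𝓝 z] F := eventually_of_mem (hV.mem_nhds hz) h
  rw [he.fderiv_eq, hΦ.fderiv]

-- first derivative of fhat
lemma fhat_hasFDerivAt {F u : ℂ → ℝ} {V : Set ℂ} (hV : IsOpen V)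
    (hF : ContDiffOn ℝ (⊤ : ℕ∞) F V) (hu : ContDiffOn ℝ (⊤ : ℕ∞) u V)
    (h0 : ∀ w ∈ V, u w ≠ 0) {z : ℂ} (hz : z ∈ V) :
    HasFDerivAt (fun w => F w - 1 / 2 * Real.log |u w|)
      (fderiv ℝ F z - (1 / 2 : ℝ) • ((u z)⁻¹ • fderiv ℝ u z)) z := by
  have hfun : (fun w => F w - 1 / 2 * Real.log |u w|)
      = fun w => F w - 1 / 2 * Real.log (u w) := by
    funext w; rw [Real.log_abs]
  rw [hfun]
  have hF' : HasFDerivAt F (fderiv ℝ F z) z := (diffAt hV hF hz).hasFDerivAt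
  have hu' : HasFDerivAt u (fderiv ℝ u z) z := (diffAt hV hu hz).hasFDerivAt
  have hlog : HasFDerivAt (fun w => Real.log (u w)) ((u z)⁻¹ • fderiv ℝ u z) z :=
    (Real.hasDerivAt_log (h0 z hz)).comp_hasFDerivAt z hu'
  exact hF'.sub (hlog.const_mul (1 / 2))

lemma fhat_fderiv_apply {F u : ℂ → ℝ} {V : Set ℂ} (hV : IsOpen V)
    (hF : ContDiffOn ℝ (⊤ : ℕ∞) F V) (hu : ContDiffOn ℝ (⊤ : ℕ∞) u V)
    (h0 : ∀ w ∈ V, u w ≠ 0) {z : ℂ} (hz : z ∈ V) (v : ℂ) :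
    fderiv ℝ (fun w => F w - 1 / 2 * Real.log |u w|) z v
      = fderiv ℝ F z v - 1 / 2 * ((u z)⁻¹ * fderiv ℝ u z v) := by
  rw [(fhat_hasFDerivAt hV hF hu h0 hz).fderiv]
  simp [mul_assoc]

lemma fhat_lap0 {F u : ℂ → ℝ} {V : Set ℂ} (hV : IsOpen V)
    (hF : ContDiffOn ℝ (⊤ : ℕ∞) F V) (hu : ContDiffOn ℝ (⊤ : ℕ∞) u V)
    (h0 : ∀ w ∈ V, u w ≠ 0) {z : ℂ} (hz : z ∈ V) :
    lap0 (fun w => F w - 1 / 2 * Real.log |u w|) z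
      = lap0 F z - 1 / 2 * ((u z)⁻¹ * lap0 u z - ((u z) ^ 2)⁻¹ * grad0sq u z) := by
  have hu' : HasFDerivAt u (fderiv ℝ u z) z := (diffAt hV hu hz).hasFDerivAt
  have key : ∀ v : ℂ,
      fderiv ℝ (fun w => fderiv ℝ (fun w => F w - 1 / 2 * Real.log |u w|) w v) z v
        = fderiv ℝ (fun w => fderiv ℝ F w v) z v
          - 1 / 2 * ((u z)⁻¹ * fderiv ℝ (fun w => fderiv ℝ u w v) z v
            + fderiv ℝ u z v * (-(u z ^ 2)⁻¹ * fderiv ℝ u z v)) := by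
    intro v
    have hΦ : HasFDerivAt (fun w => fderiv ℝ F w v)
        (fderiv ℝ (fun w => fderiv ℝ F w v) z) z :=
      (diffAt hV (smooth_fderiv_apply hV hF v) hz).hasFDerivAt
    have hΨ : HasFDerivAt (fun w => fderiv ℝ u w v)
        (fderiv ℝ (fun w => fderiv ℝ u w v) z) z :=
      (diffAt hV (smooth_fderiv_apply hV hu v) hz).hasFDerivAt
    have hinv : HasFDerivAt (fun w => (u w)⁻¹) ((-(u z ^ 2)⁻¹) • fderiv ℝ u z) z :=
      (hasDerivAt_inv (h0 z hz)).comp_hasFDerivAt z hu'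
    have hmul := hinv.mul hΨ
    have htot := hΦ.sub (hmul.const_mul (1 / 2 : ℝ))
    rw [secondDeriv_eq hV hz (fun w hw => fhat_fderiv_apply hV hF hu h0 hw v) htot]
    simp [mul_assoc]; ring
  unfold lap0 grad0sq
  rw [key 1, key Complex.I]; ring

lemma phi_hasFDerivAt {u : ℂ → ℝ} {V : Set ℂ} (hV : IsOpen V)
    (hu : ContDiffOn ℝ (⊤ : ℕ∞) u V) (h0 : ∀ w ∈ V, u w ≠ 0) (c' lam : ℝ)
    {z : ℂ} (hz : z ∈ V) :
    HasFDerivAt (fun w => c' + lam * (u w)⁻¹)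
      (lam • ((-(u z ^ 2)⁻¹) • fderiv ℝ u z)) z := by
  have hu' : HasFDerivAt u (fderiv ℝ u z) z := (diffAt hV hu hz).hasFDerivAt
  have hinv : HasFDerivAt (fun w => (u w)⁻¹) ((-(u z ^ 2)⁻¹) • fderiv ℝ u z) z :=
    (hasDerivAt_inv (h0 z hz)).comp_hasFDerivAt z hu'
  simpa using (hinv.const_mul lam).const_add c'

lemma phi_fderiv_apply {u : ℂ → ℝ} {V : Set ℂ} (hV : IsOpen V)
    (hu : ContDiffOn ℝ (⊤ : ℕ∞) u V) (h0 : ∀ w ∈ V, u w ≠ 0) (c' lam : ℝ)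
    {z : ℂ} (hz : z ∈ V) (v : ℂ) :
    fderiv ℝ (fun w => c' + lam * (u w)⁻¹) z v
      = lam * (-(u z ^ 2)⁻¹ * fderiv ℝ u z v) := by
  rw [(phi_hasFDerivAt hV hu h0 c' lam hz).fderiv]
  simp [mul_assoc]

lemma phi_grad0sq {u : ℂ → ℝ} {V : Set ℂ} (hV : IsOpen V)
    (hu : ContDiffOn ℝ (⊤ : ℕ∞) u V) (h0 : ∀ w ∈ V, u w ≠ 0) (c' lam : ℝ)
    {z : ℂ} (hz : z ∈ V) :
    grad0sq (fun w => c' + lam * (u w)⁻¹) z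
      = lam ^ 2 * ((u z ^ 2)⁻¹) ^ 2 * grad0sq u z := by
  unfold grad0sq
  rw [phi_fderiv_apply hV hu h0 c' lam hz 1, phi_fderiv_apply hV hu h0 c' lam hz Complex.I]
  ring

lemma phi_lap0 {u : ℂ → ℝ} {V : Set ℂ} (hV : IsOpen V)
    (hu : ContDiffOn ℝ (⊤ : ℕ∞) u V) (h0 : ∀ w ∈ V, u w ≠ 0) (c' lam : ℝ)
    {z : ℂ} (hz : z ∈ V) :
    lap0 (fun w => c' + lam * (u w)⁻¹) z
      = lam * (2 * u z * ((u z ^ 2) ^ 2)⁻¹ * grad0sq u z - (u z ^ 2)⁻¹ * lap0 u z) := by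
  have hu' : HasFDerivAt u (fderiv ℝ u z) z := (diffAt hV hu hz).hasFDerivAt
  have key : ∀ v : ℂ,
      fderiv ℝ (fun w => fderiv ℝ (fun w => c' + lam * (u w)⁻¹) w v) z v
        = lam * (2 * u z * ((u z ^ 2) ^ 2)⁻¹ * (fderiv ℝ u z v) ^ 2
            - (u z ^ 2)⁻¹ * fderiv ℝ (fun w => fderiv ℝ u w v) z v) := by
    intro v
    have hΨ : HasFDerivAt (fun w => fderiv ℝ u w v)
        (fderiv ℝ (fun w => fderiv ℝ u w v) z) z :=
      (diffAt hV (smooth_fderiv_apply hV hu v) hz).hasFDerivAt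
    have hsq : HasFDerivAt (fun w => u w ^ 2) ((2 * u z ^ 1) • fderiv ℝ u z) z :=
      (hasDerivAt_pow 2 (u z)).comp_hasFDerivAt z hu'
    have hinv2 : HasFDerivAt (fun w => (u w ^ 2)⁻¹)
        ((-((u z ^ 2) ^ 2)⁻¹) • ((2 * u z ^ 1) • fderiv ℝ u z)) z :=
      (hasDerivAt_inv (pow_ne_zero 2 (h0 z hz))).comp_hasFDerivAt z hsq
    have hmul := (hinv2.neg.mul hΨ).const_mul lam
    rw [secondDeriv_eq hV hz (fun w hw => phi_fderiv_apply hV hu h0 c' lam hw v) hmul]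
    simp [mul_assoc]; ring
  unfold lap0
  rw [key 1, key Complex.I]
  unfold grad0sq; ring

lemma lap0_sub_const (u : ℂ → ℝ) (c : ℝ) (z : ℂ) :
    lap0 (fun w => u w - c) z = lap0 u z := by
  have h : ∀ w, fderiv ℝ (fun w => u w - c) w = fderiv ℝ u w :=
    fun w => fderiv_sub_const c
  unfold lap0; simp only [h]

lemma grad0sq_sub_const (u : ℂ → ℝ) (c : ℝ) (z : ℂ) :
    grad0sq (fun w => u w - c) z = grad0sq u z := by
  unfold grad0sq; rw [fderiv_sub_const]

lemma grad0sq_congr {u₁ u₂ : ℂ → ℝ} {z : ℂ} (h : u₁ =ᶠ[𝓝 z] u₂) :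
    grad0sq u₁ z = grad0sq u₂ z := by
  unfold grad0sq; rw [h.fderiv_eq]

lemma lap0_congr {u₁ u₂ : ℂ → ℝ} {z : ℂ} (h : u₁ =ᶠ[𝓝 z] u₂) :
    lap0 u₁ z = lap0 u₂ z := by
  have h' : fderiv ℝ u₁ =ᶠ[𝓝 z] fderiv ℝ u₂ := h.fderiv
  have h1 : (fun w => fderiv ℝ u₁ w 1) =ᶠ[𝓝 z] (fun w => fderiv ℝ u₂ w 1) :=
    h'.mono fun w hw => by simp only [hw]
  have hI : (fun w => fderiv ℝ u₁ w Complex.I) =ᶠ[𝓝 z] (fun w => fderiv ℝ u₂ w Complex.I) :=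
    h'.mono fun w hw => by simp only [hw]
  unfold lap0; rw [h1.fderiv_eq, hI.fderiv_eq]


lemma curv_smooth {f : ℂ → ℝ} {U : Set ℂ} (hU : IsOpen U)
    (hf : ContDiffOn ℝ (⊤ : ℕ∞) f U) : ContDiffOn ℝ (⊤ : ℕ∞) (curv f) U := by
  have h1 : ContDiffOn ℝ (⊤ : ℕ∞) (lap0 f) U := by
    have ha := smooth_fderiv_apply hU (smooth_fderiv_apply hU hf 1) 1
    have hb := smooth_fderiv_apply hU (smooth_fderiv_apply hU hf Complex.I) Complex.I
    exact ha.add hb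
  exact (contDiffOn_const.mul hf).exp.mul h1



set_option maxHeartbeats 2000000 in
theorem stmt8 (a b c ε : ℝ) (hb : b ≠ (2 - a) * c) (hε : ε = -1 ∨ ε = 1)
    (U : Set ℂ) (hU : IsOpen U) (f : ℂ → ℝ) (hf : ContDiffOn ℝ (⊤ : ℕ∞) f U)
    (hR : IsGenRicci a b c f U) (hsign : ∀ z ∈ U, 0 ≤ ε * (curv f z - c)) :
    IsGenRicci (2 * (a * c + b) / (b + (a - 2) * c))
        (-2 * ε * b / (b + (a - 2) * c)) (ε * (1 - a / 2))
        (fun w => f w - (1 / 2) * Real.log |curv f w - c|) {z ∈ U | curv f z ≠ c} ∧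
      ∀ z ∈ {z ∈ U | curv f z ≠ c},
        curv (fun w => f w - (1 / 2) * Real.log |curv f w - c|) z - ε * (1 - a / 2)
          = -((b + (a - 2) * c) / 2) * ε * (curv f z - c)⁻¹ := by
  have hd : b + (a - 2) * c ≠ 0 := fun h => hb (by linarith)
  have hεne : ε ≠ 0 := by rcases hε with rfl | rfl <;> norm_num
  set V : Set ℂ := {z ∈ U | curv f z ≠ c} with hVdef
  have hVU : V ⊆ U := fun z hz => hz.1
  have hKs : ContDiffOn ℝ (⊤ : ℕ∞) (curv f) U := curv_smooth hU hf
  have hVopen : IsOpen V := by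
    have h1 : V = U ∩ (curv f) ⁻¹' {c}ᶜ := by ext w; exact Iff.rfl
    rw [h1]
    exact hKs.continuousOn.isOpen_inter_preimage hU isOpen_compl_singleton
  have h0 : ∀ w ∈ V, curv f w - c ≠ 0 := fun w hw => sub_ne_zero.mpr hw.2
  have hfV : ContDiffOn ℝ (⊤ : ℕ∞) f V := hf.mono hVU
  have hgV : ContDiffOn ℝ (⊤ : ℕ∞) (fun w => curv f w - c) V :=
    (hKs.sub contDiffOn_const).mono hVU
  have hlapg : ∀ z : ℂ, lap0 (fun w => curv f w - c) z = lap0 (curv f) z :=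
    lap0_sub_const (curv f) c
  have hgradg : ∀ z : ℂ, grad0sq (fun w => curv f w - c) z = grad0sq (curv f) z :=
    grad0sq_sub_const (curv f) c
  have habs : ∀ z ∈ V, |curv f z - c| = ε * (curv f z - c) := by
    intro z hz
    have hs := hsign z (hVU hz)
    have hne := h0 z hz
    rcases hε with rfl | rfl
    · have h2 : curv f z - c < 0 := by
        rcases lt_or_gt_of_ne hne with h | h
        · exact h
        · nlinarith
      rw [abs_of_neg h2]; ring
    · have h2 : 0 < curv f z - c := by
        rcases lt_or_gt_of_ne hne with h | h
        · nlinarith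
        · exact h
      rw [abs_of_pos h2]; ring
  have hexp : ∀ z ∈ V,
      Real.exp (2 * (f z - 1 / 2 * Real.log |curv f z - c|))
        = Real.exp (2 * f z) * (ε * (curv f z - c))⁻¹ := by
    intro z hz
    have h1 : 2 * (f z - 1 / 2 * Real.log |curv f z - c|)
        = 2 * f z - Real.log |curv f z - c| := by ring
    rw [h1, Real.exp_sub, Real.exp_log (abs_pos.mpr (h0 z hz)), habs z hz]
    exact div_eq_mul_inv _ _
  -- the key curvature formula
  have key : ∀ z ∈ V,
      curv (fun w => f w - 1 / 2 * Real.log |curv f w - c|) z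
        = ε * (1 - a / 2) + (-((b + (a - 2) * c) / 2) * ε) * (curv f z - c)⁻¹ := by
    intro z hz
    have hRz := hR z (hVU hz)
    have hlap := fhat_lap0 hVopen hfV hgV h0 hz
    rw [hlapg z, hgradg z] at hlap
    have hEne := Real.exp_ne_zero (2 * f z)
    have hne : curv f z - c ≠ 0 := h0 z hz
    have hGval : grad0sq (curv f) z
        = ((curv f z - c) * (Real.exp (2 * f z) * lap0 (curv f) z)
            - (a * curv f z + b) * (curv f z - c) ^ 2) / Real.exp (2 * f z) := by
      rw [eq_div_iff hEne]
      linear_combination hRz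
    rw [hGval] at hlap
    have hA : lap0 f z = curv f z / Real.exp (2 * f z) := by
      rw [eq_div_iff hEne]
      show lap0 f z * _ = Real.exp (2 * f z) * lap0 f z
      ring
    have hcurv : curv (fun w => f w - 1 / 2 * Real.log |curv f w - c|) z
        = Real.exp (2 * (f z - 1 / 2 * Real.log |curv f z - c|))
          * lap0 (fun w => f w - 1 / 2 * Real.log |curv f w - c|) z := rfl
    rw [hcurv, hexp z hz, hlap, hA]
    set E := Real.exp (2 * f z) with hEdef
    set L := lap0 (curv f) z with hLdef
    set k := curv f z with hkdef
    clear_value E L k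
    obtain ⟨t, rfl⟩ : ∃ t, k = t + c := ⟨k - c, by ring⟩
    have htne : t ≠ 0 := by simpa using hne
    rcases hε with rfl | rfl <;> field_simp [htne, hEne] <;> ring
  refine ⟨?_, ?_⟩
  · intro z hz
    have hEq : curv (fun w => f w - 1 / 2 * Real.log |curv f w - c|)
        =ᶠ[𝓝 z] (fun w => ε * (1 - a / 2)
          + (-((b + (a - 2) * c) / 2) * ε) * (curv f w - c)⁻¹) :=
      eventually_of_mem (hVopen.mem_nhds hz) key
    have hlapK := lap0_congr hEq
    have hgradK := grad0sq_congr hEq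
    rw [phi_lap0 hVopen hgV h0 _ _ hz, hlapg z, hgradg z] at hlapK
    rw [phi_grad0sq hVopen hgV h0 _ _ hz, hgradg z] at hgradK
    beta_reduce
    rw [hlapK, hgradK, key z hz, hexp z hz]
    have hRz := hR z (hVU hz)
    have hEne := Real.exp_ne_zero (2 * f z)
    have hne : curv f z - c ≠ 0 := h0 z hz
    have hGval : grad0sq (curv f) z
        = ((curv f z - c) * (Real.exp (2 * f z) * lap0 (curv f) z)
            - (a * curv f z + b) * (curv f z - c) ^ 2) / Real.exp (2 * f z) := by
      rw [eq_div_iff hEne]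
      linear_combination hRz
    rw [hGval]
    set E := Real.exp (2 * f z) with hEdef
    set L := lap0 (curv f) z with hLdef
    set k := curv f z with hkdef
    clear_value E L k
    obtain ⟨t, rfl⟩ : ∃ t, k = t + c := ⟨k - c, by ring⟩
    have htne : t ≠ 0 := by simpa using hne
    rcases hε with rfl | rfl <;> field_simp [htne, hEne] <;> ring
  · intro z hz
    rw [key z hz]
    ring
end

section
/- Let a < 0, m a positive integer, and U ⊆ ℂ open with 0 ∈ U. Let v : U → ℝ be smooth with −Δ₀v = (1 − a/2)·e^{2v}·|z|^{2m} on U∖{0} (so e^{2v}|z|^{2m}|dz|² has constant curvature 1 − a/2 on U∖{0}, with a conical singularity of order m at 0), and let u : U → ℝ be smooth and harmonic on U∖{0} (so e^{2u}|z|^{4m/a}|dz|² is flat on U∖{0}). Then the function w = (2v − au)/(2 − a) is smooth on U, the metric ds² = e^{2w}|dz|² (which on U∖{0} equals V^{2/(2−a)}·e^{2u}|z|^{4m/a}|dz|² with V = e^{2v−2u}|z|^{2m(1−2/a)}) is a generalized Ricci metric of type (a,0,0) on U, and its curvature K = V^{a/(a−2)} satisfies: K > 0 on U∖{0}, K(0)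 = 0, and K(z)/|z|^{2m} extends to a positive continuous function at 0 (i.e., √K has a zero of order exactly m at 0). -/
open Filter Topology

theorem fderiv_eqOn' {g₁ g₂ : ℂ → ℝ} {U : Set ℂ} (hU : IsOpen U) (h : Set.EqOn g₁ g₂ U)
    {z : ℂ} (hz : z ∈ U) : fderiv ℝ g₁ z = fderiv ℝ g₂ z :=
  Filter.EventuallyEq.fderiv_eq (Filter.eventuallyEq_of_mem (hU.mem_nhds hz) h)

theorem lap0_congrOn {g₁ g₂ : ℂ → ℝ} {U : Set ℂ} (hU : IsOpen U) (h : Set.EqOn g₁ g₂ U)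
    {z : ℂ} (hz : z ∈ U) : lap0 g₁ z = lap0 g₂ z := by
  have h1 : ∀ d : ℂ, (fun w => fderiv ℝ g₁ w d) =ᶠ[𝓝 z] (fun w => fderiv ℝ g₂ w d) :=
    fun d => Filter.eventuallyEq_of_mem (hU.mem_nhds hz)
      (fun w hw => by rw [fderiv_eqOn' hU h hw])
  unfold lap0
  rw [(h1 1).fderiv_eq, (h1 Complex.I).fderiv_eq]

theorem grad0sq_congrOn {g₁ g₂ : ℂ → ℝ} {U : Set ℂ} (hU : IsOpen U) (h : Set.EqOn g₁ g₂ U)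
    {z : ℂ} (hz : z ∈ U) : grad0sq g₁ z = grad0sq g₂ z := by
  unfold grad0sq
  rw [fderiv_eqOn' hU h hz]

theorem contDiffOn_fderiv_apply {g : ℂ → ℝ} {U : Set ℂ} (hU : IsOpen U)
    (hg : ContDiffOn ℝ (⊤ : ℕ∞) g U) (d : ℂ) :
    ContDiffOn ℝ (⊤ : ℕ∞) (fun w => fderiv ℝ g w d) U :=
  (hg.fderiv_of_isOpen hU (by simp)).clm_apply contDiffOn_const

theorem diffAt_fderiv_apply {g : ℂ → ℝ} {U : Set ℂ} (hU : IsOpen U)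
    (hg : ContDiffOn ℝ (⊤ : ℕ∞) g U) {z : ℂ} (hz : z ∈ U) (d : ℂ) :
    DifferentiableAt ℝ (fun w => fderiv ℝ g w d) z :=
  ((contDiffOn_fderiv_apply hU hg d).contDiffAt (hU.mem_nhds hz)).differentiableAt (by simp)

theorem diffAt_of_contDiffOn {g : ℂ → ℝ} {U : Set ℂ} (hU : IsOpen U)
    (hg : ContDiffOn ℝ (⊤ : ℕ∞) g U) {z : ℂ} (hz : z ∈ U) : DifferentiableAt ℝ g z :=
  (hg.contDiffAt (hU.mem_nhds hz)).differentiableAt (by simp)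

theorem lap0_continuousOn {g : ℂ → ℝ} {U : Set ℂ} (hU : IsOpen U)
    (hg : ContDiffOn ℝ (⊤ : ℕ∞) g U) : ContinuousOn (lap0 g) U := by
  have h1 : ∀ d : ℂ, ContinuousOn (fun w => fderiv ℝ (fun w => fderiv ℝ g w d) w d) U :=
    fun d => (contDiffOn_fderiv_apply hU (contDiffOn_fderiv_apply hU hg d) d).continuousOn
  exact (h1 1).add (h1 Complex.I)

theorem lap0_comb {g₁ g₂ : ℂ → ℝ} {U : Set ℂ} (hU : IsOpen U)
    (h1 : ContDiffOn ℝ (⊤ : ℕ∞) g₁ U) (h2 : ContDiffOn ℝ (⊤ : ℕ∞) g₂ U) (c₁ c₂ : ℝ)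
    {z : ℂ} (hz : z ∈ U) :
    lap0 (fun w => c₁ * g₁ w + c₂ * g₂ w) z = c₁ * lap0 g₁ z + c₂ * lap0 g₂ z := by
  have hd : ∀ w ∈ U, ∀ d : ℂ, fderiv ℝ (fun w => c₁ * g₁ w + c₂ * g₂ w) w d
      = c₁ * fderiv ℝ g₁ w d + c₂ * fderiv ℝ g₂ w d := by
    intro w hw d
    have d1 : DifferentiableAt ℝ g₁ w := diffAt_of_contDiffOn hU h1 hw
    have d2 : DifferentiableAt ℝ g₂ w := diffAt_of_contDiffOn hU h2 hw
    rw [fderiv_fun_add (d1.const_mul c₁) (d2.const_mul c₂), fderiv_const_mul d1 c₁,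
      fderiv_const_mul d2 c₂]
    simp
  have he : ∀ d : ℂ, (fun w => fderiv ℝ (fun w => c₁ * g₁ w + c₂ * g₂ w) w d)
      =ᶠ[𝓝 z] (fun w => c₁ * fderiv ℝ g₁ w d + c₂ * fderiv ℝ g₂ w d) :=
    fun d => Filter.eventuallyEq_of_mem (hU.mem_nhds hz) (fun w hw => hd w hw d)
  have key : ∀ d : ℂ, fderiv ℝ (fun w => fderiv ℝ (fun w => c₁ * g₁ w + c₂ * g₂ w) w d) z d
      = c₁ * fderiv ℝ (fun w => fderiv ℝ g₁ w d) z d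
        + c₂ * fderiv ℝ (fun w => fderiv ℝ g₂ w d) z d := by
    intro d
    have e1 := diffAt_fderiv_apply hU h1 hz d
    have e2 := diffAt_fderiv_apply hU h2 hz d
    rw [(he d).fderiv_eq, fderiv_fun_add (e1.const_mul c₁) (e2.const_mul c₂),
      fderiv_const_mul e1 c₁, fderiv_const_mul e2 c₂]
    simp
  unfold lap0
  rw [key 1, key Complex.I]
  ring

theorem hasFDerivAt_S (w : ℂ) :
    HasFDerivAt (fun w : ℂ => w.re ^ 2 + w.im ^ 2)
      ((2 * w.re) • Complex.reCLM + (2 * w.im) • Complex.imCLM) w := by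
  have h1 : HasFDerivAt (fun w : ℂ => w.re) Complex.reCLM w := Complex.reCLM.hasFDerivAt
  have h2 : HasFDerivAt (fun w : ℂ => w.im) Complex.imCLM w := Complex.imCLM.hasFDerivAt
  have h1' := (hasDerivAt_pow 2 (w.re)).comp_hasFDerivAt w h1
  have h2' := (hasDerivAt_pow 2 (w.im)).comp_hasFDerivAt w h2
  have h := h1'.fun_add h2'
  exact h.congr_fderiv (by norm_num)

theorem keyD {H : ℂ → ℝ} {U : Set ℂ} (hU : IsOpen U) (hH : ContDiffOn ℝ (⊤ : ℕ∞) H U) (m : ℕ)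
    {w : ℂ} (hw : w ∈ U) (d : ℂ) :
    fderiv ℝ (fun w => Real.exp (H w) * (w.re ^ 2 + w.im ^ 2) ^ m) w d =
      Real.exp (H w) * ((m : ℝ) * (w.re ^ 2 + w.im ^ 2) ^ (m - 1)
          * (2 * w.re * d.re + 2 * w.im * d.im))
        + (w.re ^ 2 + w.im ^ 2) ^ m * (Real.exp (H w) * fderiv ℝ H w d) := by
  have hHd : HasFDerivAt H (fderiv ℝ H w) w := (diffAt_of_contDiffOn hU hH hw).hasFDerivAt
  have hP : HasFDerivAt (fun w : ℂ => (w.re ^ 2 + w.im ^ 2) ^ m)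
      (((m : ℝ) * (w.re ^ 2 + w.im ^ 2) ^ (m - 1)) •
        ((2 * w.re) • Complex.reCLM + (2 * w.im) • Complex.imCLM)) w :=
    (hasDerivAt_pow m (w.re ^ 2 + w.im ^ 2)).comp_hasFDerivAt w (hasFDerivAt_S w)
  have hK := (hHd.exp).fun_mul hP
  rw [hK.fderiv]
  simp [ContinuousLinearMap.add_apply, ContinuousLinearMap.smul_apply, smul_eq_mul,
    Complex.reCLM_apply, Complex.imCLM_apply]
  ring

theorem keyDD {H : ℂ → ℝ} {U : Set ℂ} (hU : IsOpen U) (hH : ContDiffOn ℝ (⊤ : ℕ∞) H U) (m : ℕ)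
    {z : ℂ} (hz : z ∈ U) (d : ℂ) :
    fderiv ℝ (fun w => fderiv ℝ (fun w => Real.exp (H w) * (w.re ^ 2 + w.im ^ 2) ^ m) w d) z d =
      Real.exp (H z) * fderiv ℝ H z d *
          ((m : ℝ) * (z.re ^ 2 + z.im ^ 2) ^ (m - 1) * (2 * z.re * d.re + 2 * z.im * d.im))
        + Real.exp (H z) *
          ((m : ℝ) * (((m - 1 : ℕ) : ℝ) * (z.re ^ 2 + z.im ^ 2) ^ (m - 1 - 1)
              * (2 * z.re * d.re + 2 * z.im * d.im) * (2 * z.re * d.re + 2 * z.im * d.im)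
            + (z.re ^ 2 + z.im ^ 2) ^ (m - 1) * (2 * d.re ^ 2 + 2 * d.im ^ 2)))
        + ((m : ℝ) * (z.re ^ 2 + z.im ^ 2) ^ (m - 1) * (2 * z.re * d.re + 2 * z.im * d.im))
            * (Real.exp (H z) * fderiv ℝ H z d)
        + (z.re ^ 2 + z.im ^ 2) ^ m *
            (Real.exp (H z) * fderiv ℝ H z d * fderiv ℝ H z d
              + Real.exp (H z) * fderiv ℝ (fun w => fderiv ℝ H w d) z d) := by
  have hEq : (fun w => fderiv ℝ (fun w => Real.exp (H w) * (w.re ^ 2 + w.im ^ 2) ^ m) w d)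
      =ᶠ[𝓝 z] (fun w => Real.exp (H w) * ((m : ℝ) * ((w.re ^ 2 + w.im ^ 2) ^ (m - 1)
          * (2 * w.re * d.re + 2 * w.im * d.im)))
        + (w.re ^ 2 + w.im ^ 2) ^ m * (Real.exp (H w) * fderiv ℝ H w d)) :=
    Filter.eventuallyEq_of_mem (hU.mem_nhds hz)
      (fun w hw => by rw [keyD hU hH m hw d]; ring)
  rw [hEq.fderiv_eq]
  have hHz : HasFDerivAt H (fderiv ℝ H z) z := (diffAt_of_contDiffOn hU hH hz).hasFDerivAt
  have hre : HasFDerivAt (fun w : ℂ => w.re) Complex.reCLM z := Complex.reCLM.hasFDerivAt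
  have him : HasFDerivAt (fun w : ℂ => w.im) Complex.imCLM z := Complex.imCLM.hasFDerivAt
  have hlin : HasFDerivAt (fun w : ℂ => 2 * w.re * d.re + 2 * w.im * d.im)
      ((d.re • ((2 : ℝ) • Complex.reCLM)) + (d.im • ((2 : ℝ) • Complex.imCLM))) z :=
    ((hre.const_mul 2).mul_const d.re).add ((him.const_mul 2).mul_const d.im)
  have hpow1 : HasFDerivAt (fun w : ℂ => (w.re ^ 2 + w.im ^ 2) ^ (m - 1))
      ((((m - 1 : ℕ) : ℝ) * (z.re ^ 2 + z.im ^ 2) ^ (m - 1 - 1)) •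
        ((2 * z.re) • Complex.reCLM + (2 * z.im) • Complex.imCLM)) z :=
    (hasDerivAt_pow (m - 1) (z.re ^ 2 + z.im ^ 2)).comp_hasFDerivAt z (hasFDerivAt_S z)
  have hpowm : HasFDerivAt (fun w : ℂ => (w.re ^ 2 + w.im ^ 2) ^ m)
      (((m : ℝ) * (z.re ^ 2 + z.im ^ 2) ^ (m - 1)) •
        ((2 * z.re) • Complex.reCLM + (2 * z.im) • Complex.imCLM)) z :=
    (hasDerivAt_pow m (z.re ^ 2 + z.im ^ 2)).comp_hasFDerivAt z (hasFDerivAt_S z)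
  have hHdz : HasFDerivAt (fun w => fderiv ℝ H w d)
      (fderiv ℝ (fun w => fderiv ℝ H w d) z) z :=
    (diffAt_fderiv_apply hU hH hz d).hasFDerivAt
  have hG := (hHz.exp.fun_mul ((hpow1.fun_mul hlin).const_mul (m : ℝ))).fun_add
      (hpowm.fun_mul (hHz.exp.fun_mul hHdz))
  rw [hG.fderiv]
  simp [ContinuousLinearMap.add_apply, ContinuousLinearMap.smul_apply, smul_eq_mul,
    Complex.reCLM_apply, Complex.imCLM_apply]
  ring

theorem key {H : ℂ → ℝ} {U : Set ℂ} (hU : IsOpen U) (hH : ContDiffOn ℝ (⊤ : ℕ∞) H U) (m : ℕ)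
    {z : ℂ} (hz : z ∈ U) :
    Real.exp (H z) * (z.re ^ 2 + z.im ^ 2) ^ m *
        lap0 (fun w => Real.exp (H w) * (w.re ^ 2 + w.im ^ 2) ^ m) z
      - grad0sq (fun w => Real.exp (H w) * (w.re ^ 2 + w.im ^ 2) ^ m) z
    = (Real.exp (H z) * (z.re ^ 2 + z.im ^ 2) ^ m) ^ 2 * lap0 H z := by
  have h1 := keyD hU hH m hz 1
  have hI := keyD hU hH m hz Complex.I
  have h11 := keyDD hU hH m hz 1
  have hII := keyDD hU hH m hz Complex.I
  simp only [Complex.one_re, Complex.one_im, Complex.I_re, Complex.I_im] at h1 hI h11 hII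
  unfold lap0 grad0sq
  rw [h11, hII, h1, hI]
  rcases m with _ | m
  · push_cast
    ring
  rcases m with _ | k
  · norm_num
    ring
  · simp only [Nat.add_sub_cancel]
    have p1 : (z.re ^ 2 + z.im ^ 2) ^ (k + 1) = (z.re ^ 2 + z.im ^ 2) ^ k * (z.re ^ 2 + z.im ^ 2) :=
      pow_succ _ _
    have p2 : (z.re ^ 2 + z.im ^ 2) ^ (k + 1 + 1)
        = (z.re ^ 2 + z.im ^ 2) ^ k * (z.re ^ 2 + z.im ^ 2) * (z.re ^ 2 + z.im ^ 2) := by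
      rw [pow_succ, p1]
    rw [p1, p2]
    push_cast
    ring
theorem stmt11 (a : ℝ) (ha : a < 0)
    (m : ℕ) (hm : 0 < m) (U : Set ℂ) (hU : IsOpen U) (h0 : (0 : ℂ) ∈ U)
    (v u : ℂ → ℝ) (hv : ContDiffOn ℝ (⊤ : ℕ∞) v U)
    (hvcc : ∀ z ∈ U \ {0}, -lap0 v z
      = (1 - a / 2) * (Real.exp (2 * v z) * ‖z‖ ^ (2 * m)))
    (hu : ContDiffOn ℝ (⊤ : ℕ∞) u U) (huharm : ∀ z ∈ U \ {0}, lap0 u z = 0) :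
    ContDiffOn ℝ (⊤ : ℕ∞) (fun z => (2 * v z - a * u z) / (2 - a)) U ∧
    (∀ z ∈ U \ {0},
      Real.exp (2 * ((2 * v z - a * u z) / (2 - a))) =
        (Real.exp (2 * v z - 2 * u z) * ‖z‖ ^ (2 * (m : ℝ) * (1 - 2 / a)))
            ^ (2 / (2 - a))
          * (Real.exp (2 * u z) * ‖z‖ ^ (4 * (m : ℝ) / a))) ∧
    IsGenRicci a 0 0 (fun z => -((2 * v z - a * u z) / (2 - a))) U ∧
    (∀ z ∈ U \ {0},
      curv (fun z => -((2 * v z - a * u z) / (2 - a))) z =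
        (Real.exp (2 * v z - 2 * u z) * ‖z‖ ^ (2 * (m : ℝ) * (1 - 2 / a)))
            ^ (a / (a - 2))) ∧
    (∀ z ∈ U \ {0}, 0 < curv (fun z => -((2 * v z - a * u z) / (2 - a))) z) ∧
    curv (fun z => -((2 * v z - a * u z) / (2 - a))) 0 = 0 ∧
    ∃ L : ℝ, 0 < L ∧
      Filter.Tendsto
        (fun z => curv (fun z => -((2 * v z - a * u z) / (2 - a))) z
          / ‖z‖ ^ (2 * m))
        (𝓝[≠] (0 : ℂ)) (𝓝 L) := by
  have ha2 : (2 : ℝ) - a ≠ 0 := by linarith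
  have haz : a ≠ 0 := ne_of_lt ha
  have ha2' : a - 2 ≠ 0 := by linarith
  set f : ℂ → ℝ := fun z => -((2 * v z - a * u z) / (2 - a)) with hfdef
  have hfC : ContDiffOn ℝ (⊤ : ℕ∞) f U :=
    (((contDiffOn_const.mul hv).sub (contDiffOn_const.mul hu)).div_const _).neg
  set H : ℂ → ℝ := fun w => (2 * a / (2 - a)) * u w + (-(2 * a) / (2 - a)) * v w with hHdef
  have hHC : ContDiffOn ℝ (⊤ : ℕ∞) H U := (contDiffOn_const.mul hu).add (contDiffOn_const.mul hv)
  have hHf : ∀ w, H w = 2 * f w + 2 * v w := by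
    intro w; simp only [hHdef, hfdef]; field_simp; ring
  have habs : ∀ z : ℂ, (‖z‖ : ℝ) ^ (2 * m) = (z.re ^ 2 + z.im ^ 2) ^ m := by
    intro z
    rw [pow_mul, Complex.sq_norm, Complex.normSq_apply]
    ring_nf
  set Kt : ℂ → ℝ := fun w => Real.exp (H w) * (w.re ^ 2 + w.im ^ 2) ^ m with hKtdef
  have hval : ∀ z : ℂ, Kt z
      = Real.exp (2 * f z) * (Real.exp (2 * v z) * ‖z‖ ^ (2 * m)) := by
    intro z
    simp only [hKtdef]
    rw [habs z, hHf z, Real.exp_add]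
    ring
  have hKt0 : Kt 0 = 0 := by
    simp [hKtdef, zero_pow hm.ne']
  have hlapf : ∀ z ∈ U \ {0}, lap0 f z = Real.exp (2 * v z) * ‖z‖ ^ (2 * m) := by
    intro z hz
    have hfe : f = fun w => (a / (2 - a)) * u w + (-2 / (2 - a)) * v w := by
      funext w; simp only [hfdef]; field_simp; ring
    have hlv : lap0 v z = -((1 - a / 2) * (Real.exp (2 * v z) * ‖z‖ ^ (2 * m))) := by
      have := hvcc z hz; linarith
    rw [hfe, lap0_comb hU hu hv _ _ hz.1, huharm z hz, hlv]
    field_simp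
    ring
  have hlapH : ∀ z ∈ U \ {0},
      lap0 H z = a * (Real.exp (2 * v z) * ‖z‖ ^ (2 * m)) := by
    intro z hz
    have hlv : lap0 v z = -((1 - a / 2) * (Real.exp (2 * v z) * ‖z‖ ^ (2 * m))) := by
      have := hvcc z hz; linarith
    rw [hHdef, lap0_comb hU hu hv _ _ hz.1, huharm z hz, hlv]
    field_simp
    ring
  have hcurv : ∀ z ∈ U \ {0}, curv f z = Kt z := by
    intro z hz
    unfold curv
    rw [hlapf z hz, hval z]
  have hlapf0 : lap0 f 0 = 0 := by
    have hcont : ContinuousAt (lap0 f) 0 :=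
      (lap0_continuousOn hU hfC).continuousAt (hU.mem_nhds h0)
    have hfil : 𝓝[U \ {0}] (0 : ℂ) = 𝓝[≠] (0 : ℂ) := by
      rw [Set.diff_eq, Set.inter_comm]
      exact nhdsWithin_inter_of_mem' (mem_nhdsWithin_of_mem_nhds (hU.mem_nhds h0))
    have h1 : Tendsto (lap0 f) (𝓝[≠] (0 : ℂ)) (𝓝 (lap0 f 0)) :=
      hcont.tendsto.mono_left nhdsWithin_le_nhds
    have hcv : ContinuousAt (fun z : ℂ => Real.exp (2 * v z) * ‖z‖ ^ (2 * m)) 0 := by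
      apply ContinuousAt.mul
      · exact Real.continuous_exp.continuousAt.comp
          (continuousAt_const.mul (hv.continuousOn.continuousAt (hU.mem_nhds h0)))
      · exact (continuous_norm.pow (2 * m)).continuousAt
    have hval0 : Real.exp (2 * v 0) * ‖(0 : ℂ)‖ ^ (2 * m) = 0 := by
      simp [zero_pow (by omega : 2 * m ≠ 0)]
    have ht := hcv.tendsto.mono_left (nhdsWithin_le_nhds (s := {(0 : ℂ)}ᶜ))
    rw [hval0] at ht
    have hEq : (fun z : ℂ => Real.exp (2 * v z) * ‖z‖ ^ (2 * m))
        =ᶠ[𝓝[≠] (0 : ℂ)] lap0 f := by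
      rw [← hfil]
      exact Filter.eventuallyEq_of_mem self_mem_nhdsWithin
        (fun z hz => (hlapf z hz).symm)
    exact tendsto_nhds_unique h1 (ht.congr' hEq)
  have hcurv0 : curv f 0 = 0 := by
    unfold curv
    rw [hlapf0, mul_zero]
  have hEqOn : Set.EqOn (curv f) Kt U := by
    intro z hz
    by_cases h : z = 0
    · subst h; rw [hcurv0, hKt0]
    · exact hcurv z ⟨hz, h⟩
  refine ⟨?_, ?_, ?_, ?_, ?_, hcurv0, ?_⟩
  · exact ((contDiffOn_const.mul hv).sub (contDiffOn_const.mul hu)).div_const _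
  · -- metric identity
    intro z hz
    have hr : (0 : ℝ) < ‖z‖ := by
      simpa using (norm_pos_iff.mpr (by exact hz.2))
    rw [Real.mul_rpow (Real.exp_nonneg _) (Real.rpow_nonneg hr.le _), ← Real.exp_mul,
      ← Real.rpow_mul hr.le,
      show 2 * (m : ℝ) * (1 - 2 / a) * (2 / (2 - a)) = -(4 * (m : ℝ) / a) by
        field_simp; ring,
      Real.rpow_neg hr.le]
    have hrc : (0 : ℝ) < ‖z‖ ^ (4 * (m : ℝ) / a) := Real.rpow_pos_of_pos hr _
    rw [show Real.exp ((2 * v z - 2 * u z) * (2 / (2 - a))) *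
          (‖z‖ ^ (4 * (m : ℝ) / a))⁻¹ *
          (Real.exp (2 * u z) * ‖z‖ ^ (4 * (m : ℝ) / a))
        = Real.exp ((2 * v z - 2 * u z) * (2 / (2 - a))) * Real.exp (2 * u z) *
          ((‖z‖ ^ (4 * (m : ℝ) / a))⁻¹ * ‖z‖ ^ (4 * (m : ℝ) / a)) from by
        ring,
      inv_mul_cancel₀ hrc.ne', mul_one, ← Real.exp_add]
    congr 1
    field_simp
    ring
  · -- IsGenRicci
    intro z hz
    have hrw1 : lap0 (curv f) z = lap0 Kt z := lap0_congrOn hU hEqOn hz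
    have hrw2 : grad0sq (curv f) z = grad0sq Kt z := grad0sq_congrOn hU hEqOn hz
    have hrw3 : curv f z = Kt z := hEqOn hz
    rw [hrw3, hrw1, hrw2]
    have hkey := key hU hHC m hz
    rw [← hKtdef] at hkey
    by_cases hz0 : z = 0
    · subst hz0
      have hg0 : grad0sq Kt 0 = 0 := by
        have hd1 := keyD hU hHC m h0 1
        have hdI := keyD hU hHC m h0 Complex.I
        simp only [Complex.zero_re, Complex.zero_im] at hd1 hdI
        rw [← hKtdef] at hd1 hdI
        unfold grad0sq
        rw [hd1, hdI]
        simp [zero_pow hm.ne']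
      rw [hKt0, hg0]
      ring
    · have hlH := hlapH z ⟨hz, hz0⟩
      linear_combination (-Real.exp (2 * f z)) * hkey
        + (-(Real.exp (2 * f z)) * Kt z ^ 2) * hlH + (a * Kt z ^ 2) * hval z
  · -- curvature formula
    intro z hz
    have hr : (0 : ℝ) < ‖z‖ := by
      simpa using (norm_pos_iff.mpr (by exact hz.2))
    rw [hcurv z hz, hval z,
      Real.mul_rpow (Real.exp_nonneg _) (Real.rpow_nonneg hr.le _), ← Real.exp_mul,
      ← Real.rpow_mul hr.le,
      show 2 * (m : ℝ) * (1 - 2 / a) * (a / (a - 2)) = ((2 * m : ℕ) : ℝ) by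
        push_cast; field_simp,
      Real.rpow_natCast]
    rw [show Real.exp (2 * f z) * (Real.exp (2 * v z) * ‖z‖ ^ (2 * m))
        = Real.exp (2 * f z) * Real.exp (2 * v z) * ‖z‖ ^ (2 * m) from by ring,
      ← Real.exp_add]
    congr 1
    congr 1
    simp only [hfdef]
    field_simp
    ring
  · -- positivity
    intro z hz
    have hr : (0 : ℝ) < ‖z‖ := by
      simpa using (norm_pos_iff.mpr (by exact hz.2))
    rw [hcurv z hz, hval z]
    exact mul_pos (Real.exp_pos _) (mul_pos (Real.exp_pos _) (pow_pos hr _))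
  · -- limit
    refine ⟨Real.exp (2 * f 0) * Real.exp (2 * v 0), by positivity, ?_⟩
    have hf0 : ContinuousAt f 0 := hfC.continuousOn.continuousAt (hU.mem_nhds h0)
    have hv0 : ContinuousAt v 0 := hv.continuousOn.continuousAt (hU.mem_nhds h0)
    have ht : Tendsto (fun z : ℂ => Real.exp (2 * f z) * Real.exp (2 * v z)) (𝓝[≠] (0 : ℂ))
        (𝓝 (Real.exp (2 * f 0) * Real.exp (2 * v 0))) := by
      refine ContinuousAt.tendsto ?_ |>.mono_left nhdsWithin_le_nhds
      exact (Real.continuous_exp.continuousAt.comp (continuousAt_const.mul hf0)).mul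
        (Real.continuous_exp.continuousAt.comp (continuousAt_const.mul hv0))
    refine ht.congr' ?_
    have hUev : ∀ᶠ z in 𝓝[≠] (0 : ℂ), z ∈ U := mem_nhdsWithin_of_mem_nhds (hU.mem_nhds h0)
    filter_upwards [hUev, self_mem_nhdsWithin] with z hzU hz0
    have hr : (0 : ℝ) < ‖z‖ := norm_pos_iff.mpr hz0
    rw [hcurv z ⟨hzU, hz0⟩, hval z, mul_div_assoc, mul_div_assoc,
      div_self (pow_ne_zero _ hr.ne'), mul_one]
end
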